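/- arXiv:2412.13785 — 3 statements merged into one kernel-verified Lean document; each statement's English description precedes it below -/
import Mathlib

section
/- If there exists an injection from X into S × η for some ordinal η, then there exists an injection from X into S × η' for some ordinal η' that is 'minitial': η' is least among ordinals such that X injects into S × η', and for every s ∈ S, the image of the injection intersected with {s} × η' equals {s} × η_s for some ordinal η_s ≤ η'. -/
/-!
Ordinals are well-founded, so there is a least `η'` such that `X` injects into `S × η'`; fix such
an injection `g`. For each `s`, the fiber `{β | (s, β) ∈ range g}` is a well-ordered subset of `η'`,
so its order type `η_s` is at most `η'`, and replacing each `β` by its position in the fiber maps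
that fiber onto the initial segment `η_s` while keeping the map injective.
-/

universe u

/-- The ordinal corresponding to an element of `o.ToType`. -/
noncomputable def ordIdx {o : Ordinal.{u}} (β : o.ToType) : Ordinal.{u} :=
  @Ordinal.typein o.ToType (· < ·) isWellOrder_lt β

open Ordinal Set Function

section FiberRank

variable {S α : Type u} [LinearOrder α] [WellFoundedLT α] (R : Set (S × α))

noncomputable def fiberType (s : S) : Ordinal.{u} := typeLT (Prod.mk s ⁻¹' R)

noncomputable def fiberRank (p : R) : S × Ordinal.{u} :=
  (p.1.1, typein (α := Prod.mk p.1.1 ⁻¹' R) (· < ·) ⟨p.1.2, p.2⟩)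

theorem fiberType_le (s : S) : fiberType R s ≤ typeLT α :=
  (OrderEmbedding.subtype _).ltEmbedding.ordinal_type_le

theorem fiberRank_injective : Injective (fiberRank R) := by
  rintro ⟨⟨s, a⟩, ha⟩ ⟨⟨t, b⟩, hb⟩ h
  obtain ⟨rfl, h⟩ := Prod.ext_iff.1 h
  obtain rfl : a = b := congrArg Subtype.val (typein_injective _ h)
  rfl

theorem mem_range_fiberRank {s : S} {γ : Ordinal.{u}} :
    (s, γ) ∈ range (fiberRank R) ↔ γ < fiberType R s := by
  constructor
  · rintro ⟨⟨⟨t, a⟩, ha⟩, h⟩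
    obtain ⟨rfl, rfl⟩ := Prod.ext_iff.1 h
    exact typein_lt_type _ _
  · intro hγ
    obtain ⟨⟨a, ha⟩, rfl⟩ := typein_surj _ hγ
    exact ⟨⟨(s, a), ha⟩, rfl⟩

end FiberRank

theorem toType_mk_eq_iff {o : Ordinal.{u}} {γ : Iio o} {β : o.ToType} :
    ToType.mk γ = β ↔ (γ : Ordinal) = ordIdx β := by
  rw [eq_comm, ← OrderIso.symm_apply_eq, Subtype.ext_iff, eq_comm]; rfl

theorem exists_injective_with_initial_fibers {S : Type u} {o : Ordinal.{u}}
    (R : Set (S × o.ToType)) :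
    ∃ φ : R → S × o.ToType, Injective φ ∧
      ∀ s : S, ∃ γ ≤ o, ∀ β : o.ToType, (s, β) ∈ range φ ↔ ordIdx β < γ := by
  have hlt (p : R) : (fiberRank R p).2 < o :=
    ((mem_range_fiberRank R).1 ⟨p, rfl⟩).trans_le ((fiberType_le R _).trans_eq (type_toType o))
  refine ⟨fun p => ((fiberRank R p).1, ToType.mk ⟨(fiberRank R p).2, hlt p⟩), ?_, fun s => ?_⟩
  · intro p q h
    obtain ⟨h₁, h₂⟩ := Prod.ext_iff.1 h
    exact fiberRank_injective R (Prod.ext h₁ congr(($(ToType.mk.injective h₂) : Ordinal)))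
  · refine ⟨fiberType R s, (fiberType_le R s).trans_eq (type_toType o), fun β => ?_⟩
    simp only [← mem_range_fiberRank, mem_range, Prod.ext_iff, toType_mk_eq_iff]

/-- if `X` injects into `S × η` for some ordinal `η`, then there is a
minitial embedding of `X` into some `S × η'`: `η'` is least among ordinals such that
`X` injects into `S × η'`, and for each `s : S` the image of the injection meets
`{s} × η'` in an initial segment `{s} × η_s` with `η_s ≤ η'`. -/
theorem minitial_embedding_exists (S X : Type u)
    (h : ∃ η : Ordinal.{u}, ∃ f : X → S × η.ToType, Function.Injective f) :
    ∃ η' : Ordinal.{u}, ∃ f : X → S × η'.ToType, Function.Injective f ∧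
      (∀ ξ : Ordinal.{u}, (∃ g : X → S × ξ.ToType, Function.Injective g) → η' ≤ ξ) ∧
      (∀ s : S, ∃ ηs : Ordinal.{u}, ηs ≤ η' ∧
        ∀ β : η'.ToType, (s, β) ∈ Set.range f ↔ ordIdx β < ηs) := by
  obtain ⟨g, hg⟩ := csInf_mem (s := {η : Ordinal.{u} | ∃ f : X → S × η.ToType, Injective f}) h
  obtain ⟨φ, hφ, hfib⟩ := exists_injective_with_initial_fibers (range g)
  refine ⟨_, φ ∘ rangeFactorization g, hφ.comp (rangeFactorization_injective.2 hg),
    fun ξ hξ => csInf_le' hξ, ?_⟩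
  rwa [rangeFactorization_surjective.range_comp]
end

section
/- If there exists a surjection from S × η onto X for some ordinal η, then there exists a minitial partial surjection from S × η' onto X: η' is least among ordinals such that some subset of S × η' surjects onto X, the domain restricted to each {s} × η' is an initial segment {s} × η_s, and the restriction to each {s} × η_s is injective. -/
universe u

/-!
Take `η'` least such that a subset `A ⊆ S × η'` surjects onto `X` via some `g`. The values `V s`
taken by `g` on the column `{s} × η'` have cardinality at most `|η'|`, so the initial ordinal
`η_s` of `|V s|` is at most `η'`, and the initial segment `{s} × η_s` can be mapped bijectively
onto `V s`. Since the `V s` cover `X`, these bijections together form the required partial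
surjection.
-/

open Cardinal Function

section Columns

variable {S T X : Type*}

def columnImage (A : Set (S × T)) (g : A → X) (s : S) : Set X :=
  Set.range fun t : {t // (s, t) ∈ A} => g ⟨(s, t.1), t.2⟩

theorem exists_mem_columnImage_of_surjective {A : Set (S × T)} {g : A → X} (hg : Surjective g)
    (x : X) : ∃ s, x ∈ columnImage A g s := by
  obtain ⟨⟨⟨s, t⟩, h⟩, rfl⟩ := hg x
  exact ⟨s, ⟨t, h⟩, rfl⟩

theorem mk_columnImage_le {T X : Type u} (A : Set (S × T)) (g : A → X) (s : S) :
    #(columnImage A g s) ≤ #T :=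
  mk_range_le.trans (mk_subtype_le _)

theorem exists_surjective_injective_on_columns (V : S → Set X) (hV : ∀ x, ∃ s, x ∈ V s)
    (I : S → Set T) (e : ∀ s, I s ≃ V s) :
    ∃ f : {p : S × T | p.2 ∈ I p.1} → X, Surjective f ∧
      ∀ x y : {p : S × T | p.2 ∈ I p.1}, x.1.1 = y.1.1 → f x = f y → x = y := by
  refine ⟨fun p => e p.1.1 ⟨p.1.2, p.2⟩, fun x => ?_, ?_⟩
  · obtain ⟨s, hs⟩ := hV x
    obtain ⟨⟨t, ht⟩, htx⟩ := (e s).surjective ⟨x, hs⟩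
    exact ⟨⟨(s, t), ht⟩, congrArg Subtype.val htx⟩
  · rintro ⟨⟨s, t⟩, ht⟩ ⟨⟨s', t'⟩, ht'⟩ (rfl : s = s') hf
    have : t = t' := congrArg Subtype.val ((e s).injective (Subtype.ext hf))
    subst this
    rfl

end Columns

theorem mk_setOf_ordIdx_lt {o a : Ordinal.{u}} (ha : a ≤ o) :
    #{β : o.ToType | ordIdx β < a} = a.card := by
  have e : {β : o.ToType | ordIdx β < a} ≃ a.ToType :=
    calc {β : o.ToType | ordIdx β < a}
        ≃ {p : Set.Iio o // p.1 < a} :=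
          Ordinal.ToType.mk.symm.toEquiv.subtypeEquiv fun _ => Iff.rfl
      _ ≃ Set.Iio a :=
          (Equiv.subtypeSubtypeEquivSubtypeInter _ _).trans
            (Equiv.subtypeEquivRight fun _ => and_iff_right_of_imp fun h => lt_of_lt_of_le h ha)
      _ ≃ a.ToType := Ordinal.ToType.mk.toEquiv
  rw [mk_congr e, mk_toType]

/-- if some `S × η` surjects onto `X` (for an ordinal `η`), then there is a
minitial partial surjection `f : S × η' ⇀ X`: `η'` is least among ordinals such that a
subset of `S × η'` surjects onto `X`, the domain of `f` meets each `{s} × η'` in an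
initial segment `{s} × η_s` with `η_s ≤ η'`, and `f` is injective on each `{s} × η_s`. -/
theorem minitial_partial_surjection_exists (S X : Type u)
    (h : ∃ η : Ordinal.{u}, ∃ (A : Set (S × η.ToType)) (f : A → X), Function.Surjective f) :
    ∃ (η' : Ordinal.{u}) (D : Set (S × η'.ToType)) (f : D → X), Function.Surjective f ∧
      (∀ ξ : Ordinal.{u},
        (∃ (A : Set (S × ξ.ToType)) (g : A → X), Function.Surjective g) → η' ≤ ξ) ∧
      (∀ s : S, ∃ ηs : Ordinal.{u}, ηs ≤ η' ∧
        ∀ β : η'.ToType, (s, β) ∈ D ↔ ordIdx β < ηs) ∧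
      (∀ x y : D, (x : S × η'.ToType).1 = (y : S × η'.ToType).1 → f x = f y → x = y) := by
  obtain ⟨η', ⟨A, g, hg⟩, hmin⟩ : ∃ η' : Ordinal.{u},
      (∃ (A : Set (S × η'.ToType)) (g : A → X), Surjective g) ∧
      ∀ ξ : Ordinal.{u}, (∃ (A : Set (S × ξ.ToType)) (g : A → X), Surjective g) → η' ≤ ξ :=
    ⟨_, csInf_mem h, fun _ hξ => csInf_le' hξ⟩
  set ηs : S → Ordinal.{u} := fun s => (#(columnImage A g s)).ord
  have hle (s : S) : ηs s ≤ η' := ord_le.2 ((mk_columnImage_le A g s).trans (mk_toType η').le)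
  have e (s : S) : {β : η'.ToType | ordIdx β < ηs s} ≃ columnImage A g s :=
    (Cardinal.eq.1 (by rw [mk_setOf_ordIdx_lt (hle s), card_ord])).some
  obtain ⟨f, hf, hinj⟩ :=
    exists_surjective_injective_on_columns _ (exists_mem_columnImage_of_surjective hg) _ e
  exact ⟨η', _, f, hf, hmin, fun s => ⟨ηs s, hle s, fun _ => Iff.rfl⟩, hinj⟩
end

section
/- SVC⁺(S) implies SVC(S), and SVC(S) implies SVC⁺(𝒫(S)). -/
/-!
Given a surjection `g` from `A ⊆ S × η` onto `X`, send `x` to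
the least `α < η` at which `x` is hit, together with the slice `{s | g (s, α) = x}`. Slices of
distinct points at the same level are disjoint and nonempty, so this is an injection
`X ↪ 𝒫(S) × η`.
-/

universe u

/-- `|X| ≤* |Y|`: a subset of `Y` surjects onto `X`. -/
def SurjOnto (X Y : Type u) : Prop :=
  ∃ (A : Set Y) (f : A → X), Function.Surjective f

/-- Small violations of choice with seed `S`. -/
def SVC (S : Type u) : Prop :=
  ∀ X : Type u, ∃ η : Ordinal.{u}, SurjOnto X (S × η.ToType)

/-- The injective form of small violations of choice with seed `S`. -/
def SVCplus (S : Type u) : Prop :=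
  ∀ X : Type u, ∃ η : Ordinal.{u}, ∃ f : X → S × η.ToType, Function.Injective f

theorem surjOnto_of_injective {X Y : Type u} {f : X → Y} (hf : Function.Injective f) :
    SurjOnto X Y :=
  ⟨Set.range f, (Equiv.ofInjective f hf).symm, (Equiv.ofInjective f hf).symm.surjective⟩

theorem SVCplus.svc {S : Type u} (h : SVCplus S) : SVC S :=
  fun X => (h X).imp fun _ ⟨_, hf⟩ => surjOnto_of_injective hf

section Slice

variable {X S T : Type u} {A : Set (S × T)} (g : A → X)

def slice (x : X) (t : T) : Set S :=
  {s | ∃ h : (s, t) ∈ A, g ⟨(s, t), h⟩ = x}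

theorem eq_of_mem_slice {x y : X} {s : S} {t : T} (hx : s ∈ slice g x t)
    (hy : s ∈ slice g y t) : x = y := by
  obtain ⟨_, rfl⟩ := hx
  obtain ⟨_, rfl⟩ := hy
  rfl

theorem exists_slice_nonempty (hg : Function.Surjective g) (x : X) :
    ∃ t, (slice g x t).Nonempty := by
  obtain ⟨⟨⟨s, t⟩, hst⟩, rfl⟩ := hg x
  exact ⟨t, s, hst, rfl⟩

theorem exists_injective_slice_prod [LT T] [WellFoundedLT T] (hg : Function.Surjective g) :
    ∃ f : X → Set S × T, Function.Injective f := by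
  let level : X → T := fun x =>
    wellFounded_lt.min {t | (slice g x t).Nonempty} (exists_slice_nonempty g hg x)
  have level_mem (x : X) : (slice g x (level x)).Nonempty :=
    wellFounded_lt.min_mem {t | (slice g x t).Nonempty} (exists_slice_nonempty g hg x)
  refine ⟨fun x => (slice g x (level x), level x), fun x y hxy => ?_⟩
  obtain ⟨hslice, hlevel⟩ := Prod.mk.inj hxy
  obtain ⟨s, hs⟩ := level_mem x
  refine eq_of_mem_slice g hs ?_
  rwa [hlevel, ← hslice]

end Slice

theorem SurjOnto.exists_injective_set_prod {X S T : Type u} [LT T] [WellFoundedLT T]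
    (h : SurjOnto X (S × T)) : ∃ f : X → Set S × T, Function.Injective f :=
  let ⟨_, g, hg⟩ := h
  exists_injective_slice_prod g hg

theorem SVC.svcplus_set {S : Type u} (h : SVC S) : SVCplus (Set S) :=
  fun X => (h X).imp fun _ hX => hX.exists_injective_set_prod

/-- `SVC⁺(S)` implies `SVC(S)`, and `SVC(S)` implies `SVC⁺(𝒫(S))`. -/
theorem svcplus_implies_svc_and_svc_implies_svcplus_powerset (S : Type u) :
    (SVCplus S → SVC S) ∧ (SVC S → SVCplus (Set S)) :=
  ⟨SVCplus.svc, SVC.svcplus_set⟩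
end
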